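/- For every n ≥ 1 and every integer k with k < n, the phase-parity operator on all n qubits decomposes, up to global phase, as an alternating product over proper nonempty subsets: there exists ω : ℂ with |ω| = 1 such that D_{Finset.univ,k} = ω • ∏_{∅ ≠ S ⊊ Fin n} D_{S,k}^{(−1)^{n−|S|+1}}, where D_{S,k}^{(−1)^{n−|S|+1}} means D_{S,k} when n−|S|+1 is even and D_{S,k}⁻¹ = exp(+(π·i/2^k) • Z_S) when n−|S|+1 is odd. -/

import Mathlib

noncomputable section

/-- The parity operator `Z_S`: the diagonal matrix whose `(z,z)` entry is
`(-1) ^ (∑ j ∈ S, z j)`. -/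
def Zgad (n : ℕ) (S : Finset (Fin n)) : Matrix (Fin n → Fin 2) (Fin n → Fin 2) ℂ :=
  Matrix.diagonal fun z => (-1 : ℂ) ^ (∑ j ∈ S, (z j : ℕ))

/-- The phase-parity operator `D_{S,k} = exp(-(π i / 2^k) • Z_S)`, `k : ℤ`, `2^k : ℝ` zpow. -/
def Dop (n : ℕ) (S : Finset (Fin n)) (k : ℤ) : Matrix (Fin n → Fin 2) (Fin n → Fin 2) ℂ :=
  NormedSpace.exp ((-(↑Real.pi * Complex.I / (((2:ℝ) ^ k : ℝ) : ℂ))) • Zgad n S)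

/-- Exponentials of scalar multiples of parity operators commute (they are all diagonal). -/
theorem zcomm (n : ℕ) (c d : ℂ) (S T : Finset (Fin n)) :
    Commute (NormedSpace.exp (c • Zgad n S)) (NormedSpace.exp (d • Zgad n T)) := by
  apply Commute.exp
  unfold Zgad
  rw [Commute, SemiconjBy, Matrix.smul_mul, Matrix.mul_smul, Matrix.diagonal_mul_diagonal,
    Matrix.smul_mul, Matrix.mul_smul, Matrix.diagonal_mul_diagonal, smul_comm]
  have hfg : (fun i : Fin n → Fin 2 =>
      ((-1 : ℂ) ^ (∑ j ∈ S, (i j : ℕ))) * ((-1 : ℂ) ^ (∑ j ∈ T, (i j : ℕ)))) =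
      (fun i : Fin n → Fin 2 =>
      ((-1 : ℂ) ^ (∑ j ∈ T, (i j : ℕ))) * ((-1 : ℂ) ^ (∑ j ∈ S, (i j : ℕ)))) :=
    funext fun i => mul_comm _ _
  rw [hfg]

/-- `D_{S,k}^{(-1)^{n-|S|+1}}`: `D_{S,k}` when `n-|S|+1` is even, and
`D_{S,k}⁻¹ = exp(+(π i/2^k) • Z_S)` when `n-|S|+1` is odd. -/
def Dalt2 (n : ℕ) (k : ℤ) (S : Finset (Fin n)) : Matrix (Fin n → Fin 2) (Fin n → Fin 2) ℂ :=
  if Even (n - S.card + 1) then Dop n S k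
  else NormedSpace.exp ((↑Real.pi * Complex.I / (((2:ℝ) ^ k : ℝ) : ℂ)) • Zgad n S)

theorem dalt2Comm (n : ℕ) (k : ℤ) (S T : Finset (Fin n)) :
    Commute (Dalt2 n k S) (Dalt2 n k T) := by
  unfold Dalt2 Dop
  split <;> split <;> exact zcomm n _ _ S T

lemma exp_smul_Zgad (n : ℕ) (c : ℂ) (S : Finset (Fin n)) :
    NormedSpace.exp (c • Zgad n S)
      = Matrix.diagonal (fun z => Complex.exp (c * (-1 : ℂ) ^ (∑ j ∈ S, (z j : ℕ)))) := by
  rw [Zgad, ← Matrix.diagonal_smul, Matrix.exp_diagonal, Pi.exp_def]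
  congr 1
  funext z
  simp [← Complex.exp_eq_exp_ℂ, smul_eq_mul]

lemma noncommProd_diag {ι α : Type*} [Fintype α] [DecidableEq α] (s : Finset ι)
    (g : ι → (α → ℂ)) (comm) :
    s.noncommProd (fun i => Matrix.diagonal (g i)) comm
      = Matrix.diagonal (fun z => ∏ i ∈ s, g i z) := by
  have h := Finset.map_noncommProd s g (fun _ _ _ _ _ => Commute.all _ _)
    (Matrix.diagonalRingHom α ℂ)
  rw [Finset.noncommProd_eq_prod] at h
  simp only [Matrix.diagonalRingHom_apply] at h
  exact h.symm.trans (congrArg Matrix.diagonal (funext fun z => Finset.prod_apply z s g))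

lemma sum_all (n : ℕ) (z : Fin n → Fin 2) :
    ∑ S : Finset (Fin n), (-1 : ℂ) ^ (n - S.card) * (-1) ^ (∑ j ∈ S, (z j : ℕ))
      = ∏ j, ((-1 : ℂ) ^ (z j : ℕ) + (-1)) := by
  rw [Fintype.prod_add (fun j => (-1:ℂ)^(z j : ℕ)) (fun _ => (-1 : ℂ))]
  apply Finset.sum_congr rfl
  intro S _
  rw [Finset.prod_const, Finset.card_compl, Fintype.card_fin,
    Finset.prod_pow_eq_pow_sum, mul_comm]

lemma Dalt2_diag (n : ℕ) (k : ℤ) (S : Finset (Fin n)) :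
    Dalt2 n k S = Matrix.diagonal (fun z =>
      Complex.exp ((↑Real.pi * Complex.I / (((2:ℝ)^k : ℝ) : ℂ)) *
        ((-1:ℂ)^(n - S.card) * (-1)^(∑ j ∈ S, (z j : ℕ))))) := by
  unfold Dalt2 Dop
  split_ifs with h
  · have hodd : Odd (n - S.card) := Nat.not_even_iff_odd.mp (Nat.even_add_one.mp h)
    rw [exp_smul_Zgad, hodd.neg_one_pow]
    apply congrArg Matrix.diagonal
    funext z; congr 1; ring
  · have heven : Even (n - S.card) := by
      rw [Nat.even_add_one, not_not] at h
      exact h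
    rw [exp_smul_Zgad, heven.neg_one_pow]
    apply congrArg Matrix.diagonal
    funext z; congr 1; ring

theorem stmt12 (n : ℕ) (hn : 1 ≤ n) (k : ℤ) (hk : k < (n : ℤ)) :
    ∃ ω : ℂ, ‖ω‖ = 1 ∧
      Dop n Finset.univ k =
        ω • Finset.noncommProd
          (Finset.univ.filter fun S : Finset (Fin n) => S ≠ ∅ ∧ S ≠ Finset.univ)
          (fun S => Dalt2 n k S) (fun S _ T _ _ => dalt2Comm n k S T) := by
  have hnz : Nonempty (Fin n) := ⟨⟨0, hn⟩⟩
  set μ : ℂ := ↑Real.pi * Complex.I / (((2:ℝ)^k : ℝ) : ℂ) with hμ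
  refine ⟨Complex.exp (μ * (-1)^n), ?_, ?_⟩
  · have : μ * (-1:ℂ)^n = ((Real.pi / (2:ℝ)^k * (-1)^n : ℝ) : ℂ) * Complex.I := by
      rw [hμ]; push_cast; ring
    rw [this, Complex.norm_exp_ofReal_mul_I]
  · set F := Finset.univ.filter fun S : Finset (Fin n) => S ≠ ∅ ∧ S ≠ Finset.univ with hF
    -- product side
    have hprod : F.noncommProd (fun S => Dalt2 n k S) (fun S _ T _ _ => dalt2Comm n k S T)
        = Matrix.diagonal (fun z => Complex.exp (μ *
            ∑ S ∈ F, (-1:ℂ)^(n - S.card) * (-1)^(∑ j ∈ S, (z j : ℕ)))) := by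
      rw [Finset.noncommProd_congr rfl (fun S _ => Dalt2_diag n k S)
        (fun S _ T _ _ => dalt2Comm n k S T)]
      refine (noncommProd_diag _ _ _).trans ?_
      apply congrArg Matrix.diagonal
      funext z
      rw [Finset.mul_sum, Complex.exp_sum]
    rw [hprod]
    unfold Dop
    rw [← hμ, exp_smul_Zgad, ← Matrix.diagonal_smul]
    apply congrArg Matrix.diagonal
    funext z
    simp only [Pi.smul_apply, smul_eq_mul]
    -- abbreviations
    have hune : (∅ : Finset (Fin n)) ≠ Finset.univ :=
      Ne.symm Finset.univ_nonempty.ne_empty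
    have hsum : ∑ S ∈ F, (-1:ℂ)^(n - S.card) * (-1)^(∑ j ∈ S, (z j : ℕ))
        = (∏ j, ((-1:ℂ)^(z j : ℕ) + (-1))) - (-1)^n
            - (-1)^(∑ j, (z j : ℕ)) := by
      have h1 := Finset.sum_filter_add_sum_filter_not Finset.univ
        (fun S : Finset (Fin n) => S ≠ ∅ ∧ S ≠ Finset.univ)
        (fun S => (-1:ℂ)^(n - S.card) * (-1)^(∑ j ∈ S, (z j : ℕ)))
      have h2 : Finset.univ.filter
          (fun S : Finset (Fin n) => ¬(S ≠ ∅ ∧ S ≠ Finset.univ)) = {∅, Finset.univ} := by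
        ext S
        simp [not_and_or, or_iff_not_imp_left]
      rw [h2, Finset.sum_pair hune] at h1
      have he : (-1:ℂ)^(n - (∅ : Finset (Fin n)).card)
          * (-1)^(∑ j ∈ (∅ : Finset (Fin n)), (z j : ℕ)) = (-1)^n := by simp
      have hu : (-1:ℂ)^(n - (Finset.univ : Finset (Fin n)).card)
          * (-1)^(∑ j ∈ (Finset.univ : Finset (Fin n)), (z j : ℕ))
          = (-1)^(∑ j, (z j : ℕ)) := by
        rw [Finset.card_univ, Fintype.card_fin, Nat.sub_self, pow_zero, one_mul]
      rw [he, hu] at h1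
      rw [← sum_all n z, ← h1, hF]
      ring
    rw [hsum]
    have hT : Complex.exp (μ * ∏ j, ((-1:ℂ)^(z j : ℕ) + (-1))) = 1 := by
      by_cases hz : ∀ j, z j = 1
      · have hTval : (∏ j, ((-1:ℂ)^(z j : ℕ) + (-1))) = (-2:ℂ)^n := by
          rw [Finset.prod_congr rfl (fun j _ => by rw [hz j]; norm_num : ∀ j ∈ Finset.univ,
            ((-1:ℂ)^(z j : ℕ) + (-1)) = (-2:ℂ))]
          rw [Finset.prod_const, Finset.card_univ, Fintype.card_fin]
        set t : ℕ := ((n : ℤ) - k - 1).toNat with htdef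
        have ht : (t : ℤ) = (n : ℤ) - k - 1 := Int.toNat_of_nonneg (by omega)
        have h2c : (((2:ℝ)^k : ℝ) : ℂ) = (2:ℂ)^k := by
          rw [Complex.ofReal_zpow]; norm_num
        have hk0 : (2:ℂ)^k ≠ 0 := zpow_ne_zero _ two_ne_zero
        have hpow : (2:ℂ)^(n:ℕ) = (2:ℂ)^k * 2^(t+1) := by
          rw [← zpow_natCast (2:ℂ) n, ← zpow_natCast (2:ℂ) (t+1),
            ← zpow_add₀ (two_ne_zero : (2:ℂ) ≠ 0)]
          congr 1
          push_cast
          omega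
        have hμT : μ * (-2:ℂ)^n = (((-1:ℤ)^n * 2^t : ℤ) : ℂ) * (2 * ↑Real.pi * Complex.I) := by
          rw [hμ, h2c, neg_pow]
          push_cast
          field_simp
          rw [hpow]
          ring
        rw [hTval, hμT, Complex.exp_int_mul_two_pi_mul_I]
      · push_neg at hz
        obtain ⟨j, hj⟩ := hz
        have hj0 : (z j : ℕ) = 0 := by
          have h1 : (z j : ℕ) ≠ 1 := fun h => hj (Fin.val_injective h)
          have h2 := (z j).isLt
          omega
        have : (∏ j, ((-1:ℂ)^(z j : ℕ) + (-1))) = 0 :=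
          Finset.prod_eq_zero (Finset.mem_univ j) (by rw [hj0]; norm_num)
        rw [this, mul_zero, Complex.exp_zero]
    have harg : μ * (-1:ℂ)^n + μ * ((∏ j, ((-1:ℂ)^(z j : ℕ) + (-1))) - (-1)^n
        - (-1)^(∑ j, (z j : ℕ)))
        = μ * (∏ j, ((-1:ℂ)^(z j : ℕ) + (-1))) + (-μ) * (-1)^(∑ j, (z j : ℕ)) := by ring
    rw [← Complex.exp_add, harg, Complex.exp_add, hT, one_mul]
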